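/- Define f : ℂ² → ℙ¹ by f(z,w) := [(z+w)² : (z−w)²] for (z,w) ≠ (0,0) and f(0,0) := [1:1]. Then f is separately holomorphic on the cross X := (ℂ×ℂ) ∪ (ℂ×ℂ) = ℂ² in the sense that for every fixed a ∈ ℂ the maps w ↦ f(a,w) and z ↦ f(z,a) are holomorphic from ℂ to ℙ¹, but f is not continuous at (0,0). -/

import Mathlib

open scoped Manifold Topology
open Set MeasureTheory
open scoped LinearAlgebra.Projectivization

section Preliminaries

variable {EM : Type*} [NormedAddCommGroup EM] [NormedSpace ℂ EM]
  {HM : Type*} [TopologicalSpace HM] (I : ModelWithCorners ℂ EM HM)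
  {M : Type*} [TopologicalSpace M] [ChartedSpace HM M]

/-- A holomorphic disc in `Ω ⊆ M`: a map holomorphic on a neighborhood of the closed
unit disc, sending the closed unit disc into `Ω`. -/
def IsHoloDiscIn (Ω : Set M) (φ : ℂ → M) : Prop :=
  ∃ r : ℝ, 1 < r ∧ MDifferentiableOn 𝓘(ℂ, ℂ) I φ (Metric.ball 0 r) ∧
    ∀ t ∈ Metric.closedBall (0 : ℂ) 1, φ t ∈ Ω

/-- Normalized average of `g` over the unit circle. -/
noncomputable def circleAvg (g : ℂ → ℝ) : ℝ :=
  (2 * Real.pi)⁻¹ * ∫ θ in (0:ℝ)..(2 * Real.pi), g (Complex.exp (θ * Complex.I))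

/-- A real-valued function is plurisubharmonic on `Ω`: upper semicontinuous and satisfying
the sub-mean value inequality along every holomorphic disc contained in `Ω`. -/
def IsPSHOn (Ω : Set M) (u : M → ℝ) : Prop :=
  UpperSemicontinuousOn u Ω ∧
  ∀ φ : ℂ → M, IsHoloDiscIn I Ω φ → u (φ 0) ≤ circleAvg (fun t => u (φ t))

/-- An `EReal`-valued plurisubharmonic function on `Ω` (sub-mean value inequality is imposed on
all truncations `max u c`, `c : ℝ`). -/
def IsPSHOnE (Ω : Set M) (u : M → EReal) : Prop :=
  UpperSemicontinuousOn u Ω ∧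
  ∀ φ : ℂ → M, IsHoloDiscIn I Ω φ → ∀ c : ℝ,
    u (φ 0) ≤ ((circleAvg (fun t => (max (u (φ t)) (c : EReal)).toReal) : ℝ) : EReal)

/-- `A` is pluripolar in `Ω`: it is contained in the `-∞` set of an `EReal`-valued
plurisubharmonic function on `Ω` which is not identically `-∞` on any connected
component of `Ω`. -/
def IsPluripolarIn (Ω A : Set M) : Prop :=
  ∃ u : M → EReal, IsPSHOnE I Ω u ∧ (∀ x ∈ A, u x = ⊥) ∧
    ∀ x ∈ Ω, ∃ y ∈ connectedComponentIn Ω x, u y ≠ ⊥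

/-- `A` is locally pluripolar in `M`. -/
def IsLocallyPluripolar (A : Set M) : Prop :=
  ∀ a ∈ A, ∃ U : Set M, IsOpen U ∧ a ∈ U ∧ IsPluripolarIn I U (A ∩ U)

/-- The relative extremal function `h_{A,Ω}` : the upper envelope of plurisubharmonic
functions on `Ω` bounded by `1` on `Ω` and by `0` on `A`. -/
noncomputable def relExt (Ω A : Set M) (z : M) : ℝ :=
  sSup {y : ℝ | ∃ u : M → ℝ, IsPSHOn I Ω u ∧ (∀ x ∈ Ω, u x ≤ 1) ∧
    (∀ x ∈ A, u x ≤ 0) ∧ u z = y}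

/-- Upper semicontinuous regularization within `Ω`. -/
noncomputable def uscRegIn (Ω : Set M) (h : M → ℝ) (z : M) : ℝ :=
  Filter.limsup h (nhdsWithin z Ω)

/-- The set `A*` of points at which `A` is locally pluriregular. -/
def pluriregPts (A : Set M) : Set M :=
  {a | a ∈ closure A ∧ ∀ U : Set M, IsOpen U → a ∈ U →
    uscRegIn U (relExt I U (A ∩ U)) a = 0}

/-- The plurisubharmonic measure `ω̃(·, A, Ω)` of `A` relative to `Ω`. -/
noncomputable def psm (Ω A : Set M) (z : M) : ℝ :=
  uscRegIn Ω (relExt I Ω (pluriregPts I A ∩ Ω)) z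

end Preliminaries

section Hartogs

/-- The unit polydisc in `ℂⁿ`. -/
def polydisc (n : ℕ) : Set (Fin n → ℂ) := {z | ∀ j, ‖z j‖ < 1}

/-- The Hartogs figure `H_{p+2}(r)` in dimension `p + 2`. -/
def hartogsFigure (p : ℕ) (r : ℝ) : Set (Fin (p + 2) → ℂ) :=
  {z ∈ polydisc (p + 2) |
    (∀ j : Fin (p + 1), ‖z j.castSucc‖ < r) ∨
      1 - r < ‖z (Fin.last (p + 1))‖}

variable {EZ : Type*} [NormedAddCommGroup EZ] [NormedSpace ℂ EZ]
  {HZ : Type*} [TopologicalSpace HZ] (IZ : ModelWithCorners ℂ EZ HZ)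
  (Z : Type*) [TopologicalSpace Z] [ChartedSpace HZ Z]

/-- `Z` possesses the Hartogs extension property: `Z` is second countable and every
holomorphic map from a Hartogs figure into `Z` extends holomorphically to the polydisc. -/
def HasHartogsExtension : Prop :=
  SecondCountableTopology Z ∧
  ∀ (p : ℕ) (r : ℝ), 0 < r → r < 1 →
    ∀ f : (Fin (p + 2) → ℂ) → Z,
      MDifferentiableOn 𝓘(ℂ, Fin (p + 2) → ℂ) IZ f (hartogsFigure p r) →
      ∃ g : (Fin (p + 2) → ℂ) → Z,
        MDifferentiableOn 𝓘(ℂ, Fin (p + 2) → ℂ) IZ g (polydisc (p + 2)) ∧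
        EqOn g f (hartogsFigure p r)

end Hartogs


noncomputable instance : TopologicalSpace (ℙ ℂ (ℂ × ℂ)) :=
  instTopologicalSpaceQuotient

/-- A map into `ℙ¹` is holomorphic if it admits local holomorphic nonvanishing lifts. -/
def HoloToP1 (g : ℂ → ℙ ℂ (ℂ × ℂ)) : Prop :=
  ∀ a : ℂ, ∃ (U : Set ℂ) (v : ℂ → ℂ × ℂ), IsOpen U ∧ a ∈ U ∧
    DifferentiableOn ℂ v U ∧
    ∀ t ∈ U, ∃ h : v t ≠ 0, g t = Projectivization.mk ℂ (v t) h

/-! The lift `(z, w) ↦ ((z + w)², (z − w)²)` is polynomial and vanishes only at the origin, so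
every slice of `f` missing the origin is holomorphic. The two slices through the origin are the
axes, where the lift is `t² • (1, 1)`; hence `f ≡ [1:1]` there, in accordance with `f (0, 0)`.
On the diagonal, however, the lift is `(4t², 0)`, so `f ≡ [1:0]` there, a point outside the
open affine chart `{[x:y] | y ≠ 0}` around `f (0, 0) = [1:1]`. -/

def affineChartSnd : Set (ℙ ℂ (ℂ × ℂ)) := {p | p.rep.2 ≠ 0}

lemma mk_mem_affineChartSnd_iff {v : ℂ × ℂ} (hv : v ≠ 0) :
    Projectivization.mk ℂ v hv ∈ affineChartSnd ↔ v.2 ≠ 0 := by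
  obtain ⟨a, ha⟩ := Projectivization.exists_smul_eq_mk_rep ℂ v hv
  simp [affineChartSnd, ← ha, Units.smul_def, a.ne_zero]

lemma isOpen_affineChartSnd : IsOpen affineChartSnd := by
  refine isOpen_coinduced.mpr ?_
  change IsOpen {v : {v : ℂ × ℂ // v ≠ 0} | Projectivization.mk ℂ v.1 v.2 ∈ affineChartSnd}
  simp only [mk_mem_affineChartSnd_iff]
  exact isOpen_ne_fun (by fun_prop) continuous_const

lemma holoToP1_of_lift {g : ℂ → ℙ ℂ (ℂ × ℂ)} (v : ℂ → ℂ × ℂ) (hv : Differentiable ℂ v)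
    (hv0 : ∀ t, v t ≠ 0) (hg : ∀ t, g t = Projectivization.mk ℂ (v t) (hv0 t)) :
    HoloToP1 g :=
  fun _ => ⟨univ, v, isOpen_univ, mem_univ _, hv.differentiableOn, fun t _ => ⟨hv0 t, hg t⟩⟩

def EqSquaresOffOrigin (f : ℂ × ℂ → ℙ ℂ (ℂ × ℂ)) : Prop :=
  ∀ p : ℂ × ℂ, p ≠ (0, 0) →
    ∃ h : ((p.1 + p.2) ^ 2, (p.1 - p.2) ^ 2) ≠ (0 : ℂ × ℂ),
      f p = Projectivization.mk ℂ ((p.1 + p.2) ^ 2, (p.1 - p.2) ^ 2) h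

namespace EqSquaresOffOrigin

variable {f : ℂ × ℂ → ℙ ℂ (ℂ × ℂ)}

lemma apply_swap (hf : EqSquaresOffOrigin f) (z w : ℂ) : f (w, z) = f (z, w) := by
  by_cases hzw : (z, w) = (0, 0)
  · simp only [Prod.mk.injEq] at hzw
    rw [hzw.1, hzw.2]
  obtain ⟨_, hfzw⟩ := hf (z, w) hzw
  obtain ⟨_, hfwz⟩ := hf (w, z) (by simpa [and_comm] using hzw)
  rw [hfzw, hfwz, Projectivization.mk_eq_mk_iff']
  exact ⟨1, by simp only [one_smul, Prod.mk.injEq]; constructor <;> ring⟩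

lemma apply_zero_left (hf : EqSquaresOffOrigin f)
    (h0 : f (0, 0) = Projectivization.mk ℂ ((1 : ℂ), (1 : ℂ)) (by simp)) (w : ℂ) :
    f (0, w) = Projectivization.mk ℂ ((1 : ℂ), (1 : ℂ)) (by simp) := by
  by_cases hw : w = 0
  · rw [hw, h0]
  obtain ⟨_, hfw⟩ := hf (0, w) (by simp [hw])
  rw [hfw, Projectivization.mk_eq_mk_iff']
  refine ⟨w ^ 2, ?_⟩
  simp only [Prod.smul_mk, smul_eq_mul, mul_one, Prod.mk.injEq]
  constructor <;> ring

lemma holoToP1_slice (hf : EqSquaresOffOrigin f)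
    (h0 : f (0, 0) = Projectivization.mk ℂ ((1 : ℂ), (1 : ℂ)) (by simp)) (a : ℂ) :
    HoloToP1 (fun w => f (a, w)) := by
  by_cases ha : a = 0
  · subst ha
    exact holoToP1_of_lift (fun _ => (1, 1)) (differentiable_const _) (fun _ => by simp)
      (hf.apply_zero_left h0)
  have hfa : ∀ w, ∃ h : ((a + w) ^ 2, (a - w) ^ 2) ≠ (0 : ℂ × ℂ),
      f (a, w) = Projectivization.mk ℂ ((a + w) ^ 2, (a - w) ^ 2) h :=
    fun w => hf (a, w) (by simp [ha])
  choose hv0 hfv using hfa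
  exact holoToP1_of_lift (fun w => ((a + w) ^ 2, (a - w) ^ 2)) (by fun_prop) hv0 hfv

lemma apply_diag_notMem (hf : EqSquaresOffOrigin f) {t : ℂ} (ht : t ≠ 0) :
    f (t, t) ∉ affineChartSnd := by
  obtain ⟨_, hft⟩ := hf (t, t) (by simp [ht])
  simp [hft, mk_mem_affineChartSnd_iff]

lemma not_continuousAt_zero (hf : EqSquaresOffOrigin f)
    (h0 : f (0, 0) = Projectivization.mk ℂ ((1 : ℂ), (1 : ℂ)) (by simp)) :
    ¬ ContinuousAt f (0, 0) := by
  intro hc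
  have hU : affineChartSnd ∈ 𝓝 (f (0, 0)) := by
    refine isOpen_affineChartSnd.mem_nhds ?_
    rw [h0, mk_mem_affineChartSnd_iff]
    exact one_ne_zero
  have hdiag : Filter.Tendsto (fun t : ℂ => (t, t)) (𝓝[≠] 0) (𝓝 (0, 0)) :=
    ((continuous_id.prodMk continuous_id).tendsto 0).mono_left nhdsWithin_le_nhds
  obtain ⟨t, hft, ht⟩ := ((hdiag.eventually (hc hU)).and self_mem_nhdsWithin).exists
  exact hf.apply_diag_notMem ht hft

end EqSquaresOffOrigin

/-- the Alehyane–Zeriahi example `f(z,w) = [(z+w)² : (z−w)²]`,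
`f(0,0) = [1:1]`, is separately holomorphic on `ℂ × ℂ` but not continuous at `(0,0)`. -/
theorem stmt19 (f : ℂ × ℂ → ℙ ℂ (ℂ × ℂ))
    (hf0 : f (0, 0) = Projectivization.mk ℂ ((1 : ℂ), (1 : ℂ)) (by simp))
    (hf : ∀ p : ℂ × ℂ, p ≠ (0, 0) →
      ∃ h : ((p.1 + p.2) ^ 2, (p.1 - p.2) ^ 2) ≠ (0 : ℂ × ℂ),
        f p = Projectivization.mk ℂ ((p.1 + p.2) ^ 2, (p.1 - p.2) ^ 2) h) :
    (∀ a : ℂ, HoloToP1 (fun w => f (a, w)) ∧ HoloToP1 (fun z => f (z, a))) ∧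
    ¬ ContinuousAt f (0, 0) := by
  have hsq : EqSquaresOffOrigin f := hf
  refine ⟨fun a => ⟨hsq.holoToP1_slice hf0 a, ?_⟩, hsq.not_continuousAt_zero hf0⟩
  simpa only [hsq.apply_swap] using hsq.holoToP1_slice hf0 a
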